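/- Let R(x,x') be a balanced difference bounds constraint over N variables, let n ≥ 1, and let ρ be an extremal normalized path in G_R^{2N²+n}, from x_i^(p) to x_j^(q) with 1 ≤ i,j ≤ N and p,q ∈ {0, 2N²+n}. Then for all valuations ν, ν' : x → ℤ such that there exist valuations μ, κ with (ν,μ) ∈ R^{N²}, (μ,κ) ∈ R_fw^n, (μ,κ) ∈ R_bw^n, μ ∈ S_fw, κ ∈ S_bw, and (κ,ν') ∈ R^{N²}: (1) if p = 0 and q = 2N²+n then ν(x_i) − ν'(x_j) ≤ w(ρ); (2) if p = 2N²+n and q = 0 then ν'(x_i) − ν(x_j) ≤ w(ρ); (3) if p = q = 0 then ν(x_i) − ν(x_j) ≤ w(ρ); (4) if p = q = 2N²+n then ν'(x_i) − ν'(x_j) ≤ w(ρ). -/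

import Mathlib

/- ## Difference bounds constraints and their relations -/

/-- Valuations of `N` integer variables. -/
abbrev Val (N : ℕ) := Fin N → ℤ

/-- An atomic proposition `u - v ≤ c` where `u, v` range over the unprimed
(`Sum.inl`) and primed (`Sum.inr`) variables. -/
abbrev Atom (N : ℕ) := (Fin N ⊕ Fin N) × (Fin N ⊕ Fin N) × ℤ

/-- A vertex of an unfolded constraint graph: a position together with a variable. -/
abbrev Vtx (N : ℕ) := ℤ × Fin N

/-- A difference bounds constraint: a finite conjunction of atomic propositions. -/
structure DBC (N : ℕ) where
  atoms : Finset (Atom N)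

/-- A path in an unfolded constraint graph: a first vertex followed by a list of
steps, each carrying a weight and a target vertex. -/
structure UPath (N : ℕ) where
  first : Vtx N
  steps : List (ℤ × Vtx N)

variable {N : ℕ}

def interp (ν ν' : Val N) : Fin N ⊕ Fin N → ℤ
  | Sum.inl i => ν i
  | Sum.inr i => ν' i

/-- The relation on valuations defined by a difference bounds constraint. -/
def DBC.rel (R : DBC N) (ν ν' : Val N) : Prop :=
  ∀ a ∈ R.atoms, interp ν ν' a.1 - interp ν ν' a.2.1 ≤ a.2.2

/-- Relational composition. -/
def relComp (P Q : Val N → Val N → Prop) (ν ν' : Val N) : Prop :=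
  ∃ μ, P ν μ ∧ Q μ ν'

/-- `n`-fold relational composition, with `relPow P 0` the identity relation. -/
def relPow (P : Val N → Val N → Prop) : ℕ → Val N → Val N → Prop
  | 0 => Eq
  | n + 1 => relComp P (relPow P n)

/-- A DB constraint is balanced when `x i - x j ≤ c` is a conjunct iff
`x' i - x' j ≤ c` is a conjunct. -/
def DBC.Balanced (R : DBC N) : Prop :=
  ∀ (i j : Fin N) (c : ℤ),
    (Sum.inl i, Sum.inl j, c) ∈ R.atoms ↔ (Sum.inr i, Sum.inr j, c) ∈ R.atoms

/-- Forward one-directional: every atom is of the form `x i - x' j ≤ c`. -/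
def DBC.IsFw (R : DBC N) : Prop :=
  ∀ a ∈ R.atoms, ∃ (i j : Fin N) (c : ℤ), a = (Sum.inl i, Sum.inr j, c)

/-- Backward one-directional: every atom is of the form `x' i - x j ≤ c`. -/
def DBC.IsBw (R : DBC N) : Prop :=
  ∀ a ∈ R.atoms, ∃ (i j : Fin N) (c : ℤ), a = (Sum.inr i, Sum.inl j, c)

def DBC.IsOneDirectional (R : DBC N) : Prop := R.IsFw ∨ R.IsBw

/- ## Unfolded constraint graphs -/

/-- The endpoint of an atom placed at copy `p` of the unfolding: unprimed
variables live at position `p`, primed ones at position `p + 1`. -/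
def endpt (p : ℤ) : Fin N ⊕ Fin N → Vtx N
  | Sum.inl i => (p, i)
  | Sum.inr i => (p + 1, i)

/-- Edge of the unfolding contributed by copy `p` of the constraint graph. -/
def DBC.EdgeAt (R : DBC N) (p : ℤ) (u v : Vtx N) (c : ℤ) : Prop :=
  ∃ s t, (s, t, c) ∈ R.atoms ∧ u = endpt p s ∧ v = endpt p t

/-- Edge of the bi-infinite unfolding. -/
def DBC.Edge (R : DBC N) (u v : Vtx N) (c : ℤ) : Prop :=
  ∃ p : ℤ, R.EdgeAt p u v c

/-- Edge of the `n`-times unfolding `G_R^n` (copies `0, …, n-1`). -/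
def DBC.EdgeN (R : DBC N) (n : ℕ) (u v : Vtx N) (c : ℤ) : Prop :=
  ∃ p : ℤ, 0 ≤ p ∧ p < (n : ℤ) ∧ R.EdgeAt p u v c

namespace UPath

/-- The list of vertices traversed by a path. -/
def vertices (ρ : UPath N) : List (Vtx N) := ρ.first :: ρ.steps.map Prod.snd

/-- The last vertex of a path. -/
def last (ρ : UPath N) : Vtx N := (ρ.steps.map Prod.snd).getLastD ρ.first

/-- The weight of a path: the sum of its edge weights. -/
def weight (ρ : UPath N) : ℤ := (ρ.steps.map Prod.fst).sum

def posList (ρ : UPath N) : List ℤ := ρ.vertices.map Prod.fst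

/-- The set of positions of the vertices of a path. -/
def posFinset (ρ : UPath N) : Finset ℤ := ρ.posList.toFinset

theorem posFinset_nonempty (ρ : UPath N) : ρ.posFinset.Nonempty := by
  refine ⟨ρ.first.1, ?_⟩
  simp [posFinset, posList, vertices]

/-- The extent of a path: the difference between its maximal and minimal
position. -/
def extent (ρ : UPath N) : ℤ :=
  ρ.posFinset.max' ρ.posFinset_nonempty - ρ.posFinset.min' ρ.posFinset_nonempty

/-- The list of variables traversed by a path. -/
def varList (ρ : UPath N) : List (Fin N) := ρ.vertices.map Prod.snd

/-- The steps form a chain of edges w.r.t. the edge relation `E`. -/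
def EdgeChain (E : Vtx N → Vtx N → ℤ → Prop) : Vtx N → List (ℤ × Vtx N) → Prop
  | _, [] => True
  | u, s :: rest => E u s.2 s.1 ∧ EdgeChain E s.2 rest

/-- The path lies in the bi-infinite unfolding of the constraint graph of `R`. -/
def InUnf (R : DBC N) (ρ : UPath N) : Prop := EdgeChain R.Edge ρ.first ρ.steps

/-- The path lies in the `n`-times unfolding `G_R^n`. -/
def InUnfN (R : DBC N) (n : ℕ) (ρ : UPath N) : Prop :=
  EdgeChain (R.EdgeN n) ρ.first ρ.steps

/-- Concatenation (the caller must ensure `π.first = ρ.last` for this to be a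
genuine path concatenation). -/
def append (ρ π : UPath N) : UPath N := ⟨ρ.first, ρ.steps ++ π.steps⟩

/-- Shift a path by `k` positions. -/
def shift (k : ℤ) (ρ : UPath N) : UPath N :=
  ⟨(ρ.first.1 + k, ρ.first.2), ρ.steps.map fun s => (s.1, (s.2.1 + k, s.2.2))⟩

/-- Concatenation with implicit shifting: `π` is shifted so that its first
vertex is at the position of the last vertex of `ρ`. -/
def glue (ρ π : UPath N) : UPath N := ρ.append (shift (ρ.last.1 - π.first.1) π)

/-- `k`-fold concatenation of a (repeating) path with itself, each copy shifted
so that its first vertex coincides with the last vertex of the previous copy. -/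
def pow (μ : UPath N) : ℕ → UPath N
  | 0 => ⟨μ.first, []⟩
  | k + 1 => (pow μ k).glue μ

def IsVertical (ρ : UPath N) : Prop := ρ.last.1 = ρ.first.1

def IsForward (ρ : UPath N) : Prop := ρ.first.1 < ρ.last.1

def IsBackward (ρ : UPath N) : Prop := ρ.last.1 < ρ.first.1

/-- A path is repeating if its endpoints are copies of the same variable at
different positions. -/
def IsRepeating (ρ : UPath N) : Prop := ρ.first.1 ≠ ρ.last.1 ∧ ρ.first.2 = ρ.last.2

/-- Relative length: the absolute difference of the first and last positions. -/
def relLen (ρ : UPath N) : ℤ := |ρ.last.1 - ρ.first.1|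

/-- Right corner of some extent `d`: a nonempty vertical path whose positions
are exactly `{k, …, k+d}` where `k` is its first (= last) position. -/
def IsRightCorner (ρ : UPath N) : Prop :=
  ρ.steps ≠ [] ∧ ρ.last.1 = ρ.first.1 ∧
  ∃ d : ℕ, ρ.posFinset = Finset.Icc ρ.first.1 (ρ.first.1 + (d : ℤ))

/-- Left corner of some extent `d`: positions exactly `{k−d, …, k}`. -/
def IsLeftCorner (ρ : UPath N) : Prop :=
  ρ.steps ≠ [] ∧ ρ.last.1 = ρ.first.1 ∧
  ∃ d : ℕ, ρ.posFinset = Finset.Icc (ρ.first.1 - (d : ℤ)) ρ.first.1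

def IsCorner (ρ : UPath N) : Prop := ρ.IsRightCorner ∨ ρ.IsLeftCorner

/-- A corner is basic if its start/end position does not occur among the
positions of its intermediate vertices. -/
def IsBasic (ρ : UPath N) : Prop :=
  ∀ s ∈ ρ.steps.dropLast, s.2.1 ≠ ρ.first.1

/-- A long corner: a corner of extent exceeding `N²`. -/
def IsLongCorner (ρ : UPath N) : Prop := ρ.IsCorner ∧ (N : ℤ) ^ 2 < ρ.extent

/-- An lb-corner: a corner that is both long and basic. -/
def IsLBCorner (ρ : UPath N) : Prop := ρ.IsLongCorner ∧ ρ.IsBasic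

/-- `θ` is a (contiguous) subpath of `ρ`. -/
def IsSubpath (θ ρ : UPath N) : Prop :=
  ∃ pre post, ρ.steps = pre ++ θ.steps ++ post ∧ θ.first = (UPath.mk ρ.first pre).last

/-- A path is essential if its traversed variables are pairwise distinct,
except that the first and the last variable may coincide. -/
def IsEssential (ρ : UPath N) : Prop :=
  ∀ (a b : ℕ) (ha : a < ρ.varList.length) (hb : b < ρ.varList.length),
    a < b → ρ.varList.get ⟨a, ha⟩ = ρ.varList.get ⟨b, hb⟩ →
      a = 0 ∧ b = ρ.varList.length - 1

/-- An extremal path of `G_R^n`: both endpoints are at position `0` or `n`. -/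
def IsExtremalIn (n : ℕ) (ρ : UPath N) : Prop :=
  (ρ.first.1 = 0 ∨ ρ.first.1 = (n : ℤ)) ∧ (ρ.last.1 = 0 ∨ ρ.last.1 = (n : ℤ))

/-- `ρ'` is compatible with `ρ`: same first vertex, same last vertex and weight
not greater than that of `ρ`. -/
def Compatible (ρ' ρ : UPath N) : Prop :=
  ρ'.first = ρ.first ∧ ρ'.last = ρ.last ∧ ρ'.weight ≤ ρ.weight

/-- A path in `G_R^n` is normalized if none of its subpaths traversing only
positions in `{N², …, n−N²}` is a long corner. -/
def IsNormalized (n : ℕ) (ρ : UPath N) : Prop :=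
  ∀ θ : UPath N, θ.IsSubpath ρ →
    θ.posFinset ⊆ Finset.Icc ((N : ℤ) ^ 2) ((n : ℤ) - (N : ℤ) ^ 2) →
    ¬ θ.IsLongCorner

end UPath

/- ## UPath schemes -/

/-- `σ.λ*.σ'` is a path scheme: `λ` is empty or an essential repeating path,
the variables match up for concatenation, and `σ.λ.σ'` is a non-empty path. -/
def IsSchemeTriple (σ lam σ' : UPath N) : Prop :=
  (lam.steps = [] ∨ (lam.IsEssential ∧ lam.IsRepeating)) ∧
  lam.first.2 = σ.last.2 ∧ σ'.first.2 = lam.last.2 ∧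
  (σ.glue (lam.glue σ')).steps ≠ []

/-- The element `σ.λ^m.σ'` of the set of paths denoted by the scheme `σ.λ*.σ'`. -/
def schemeElem (σ lam σ' : UPath N) (m : ℕ) : UPath N :=
  σ.glue ((lam.pow m).glue σ')

/-- Shape of the `λ` component of a scheme of the class `Π_{ijkpq}`:
a path `x_k^(0) → … → x_k^(p)` of length `p` in the unfolding. -/
def LamShape (R : DBC N) (k : Fin N) (p : ℕ) (lam : UPath N) : Prop :=
  lam.InUnf R ∧ lam.first = ((0 : ℤ), k) ∧ lam.last = ((p : ℤ), k) ∧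
  lam.steps.length = p

/-- Shape of the `σ, σ'` components of a scheme of the class `Π_{ijkpq}`:
`σ : x_i^(0) → … → x_k^(r)` and `σ' : x_k^(r) → … → x_j^(q)` for some
`0 ≤ r ≤ q`, with `|σ.σ'| = q`. -/
def SigmaShape (R : DBC N) (i j k : Fin N) (q : ℕ) (σ σ' : UPath N) : Prop :=
  ∃ r : ℕ, r ≤ q ∧ σ.InUnf R ∧ σ'.InUnf R ∧
    σ.first = ((0 : ℤ), i) ∧ σ.last = ((r : ℤ), k) ∧
    σ'.first = ((r : ℤ), k) ∧ σ'.last = ((q : ℤ), j) ∧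
    σ.steps.length + σ'.steps.length = q

/-- Membership of the scheme `σ.λ*.σ'` in the class `Π_{ijkpq}`. -/
def InPi (R : DBC N) (i j k : Fin N) (p q : ℕ) (σ lam σ' : UPath N) : Prop :=
  IsSchemeTriple σ lam σ' ∧ LamShape R k p lam ∧ SigmaShape R i j k q σ σ'

/-- The set `S_ij` of quadruples `(|σ.σ'|, |λ|, w(σ.σ'), w(λ))` arising from the
minimal representative schemes `θ_{ijkpq}` of the nonempty classes `Π_{ijkpq}`. -/
def Sset (R : DBC N) (i j : Fin N) : Set (ℕ × ℕ × ℤ × ℤ) :=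
  { t | ∃ (k : Fin N) (p q : ℕ) (σ lam σ' : UPath N),
      p ≤ N ∧ q ≤ N ^ 4 ∧ 0 < p + q ∧
      (∃ ν μ ν' : UPath N, InPi R i j k p q ν μ ν') ∧
      LamShape R k p lam ∧
      (∀ lam', LamShape R k p lam' → lam.weight ≤ lam'.weight) ∧
      SigmaShape R i j k q σ σ' ∧
      (∀ σ₁ σ₁', SigmaShape R i j k q σ₁ σ₁' →
        σ.weight + σ'.weight ≤ σ₁.weight + σ₁'.weight) ∧
      t = (q, p, σ.weight + σ'.weight, lam.weight) }

/- ## Segments -/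

/-- An edge from `u` to `v` has both endpoints at positions within `{p, …, q}`. -/
def StepInRange (p q : ℤ) (u v : Vtx N) : Prop :=
  p ≤ u.1 ∧ u.1 ≤ q ∧ p ≤ v.1 ∧ v.1 ≤ q

/-- `ξ` is an element of `segments(ρ, p, q)`: a nonempty maximal subpath of `ρ`
whose positions lie within `{p, …, q}`, immediately preceded and followed (if at
all) by edges not lying within `{p, …, q}`. -/
def IsSegmentOf (ρ : UPath N) (p q : ℤ) (ξ : UPath N) : Prop :=
  ξ.steps ≠ [] ∧
  ∃ pre post, ρ.steps = pre ++ ξ.steps ++ post ∧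
    ξ.first = (UPath.mk ρ.first pre).last ∧
    ξ.posFinset ⊆ Finset.Icc p q ∧
    (∀ pre' c u, pre = pre' ++ [(c, u)] →
      ¬ StepInRange p q (UPath.mk ρ.first pre').last u) ∧
    (∀ c v post', post = (c, v) :: post' → ¬ StepInRange p q ξ.last v)

/- ## The strengthened relation and one-directional approximations -/

/-- `S_fw`: the valuations `ν` such that `∃ ν'. (ν,ν') ∈ R^{N²}`. -/
def Sfw (R : DBC N) (ν : Val N) : Prop := ∃ ν', relPow R.rel (N ^ 2) ν ν'

/-- `S_bw`: the valuations `ν'` such that `∃ ν. (ν,ν') ∈ R^{N²}`. -/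
def Sbw (R : DBC N) (ν' : Val N) : Prop := ∃ ν, relPow R.rel (N ^ 2) ν ν'

/-- The strengthened relation `R_s = R ∧ S_fw(x) ∧ S_bw(x')`. -/
def Rs (R : DBC N) (ν ν' : Val N) : Prop := R.rel ν ν' ∧ Sfw R ν ∧ Sbw R ν'

/-- `R_fw`: the strongest forward one-directional DB relation implied by `R_s`. -/
def Rfw (R : DBC N) (ν ν' : Val N) : Prop :=
  ∀ (i j : Fin N) (c : ℤ), (∀ μ μ', Rs R μ μ' → μ i - μ' j ≤ c) → ν i - ν' j ≤ c

/-- `R_bw`: the strongest backward one-directional DB relation implied by `R_s`. -/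
def Rbw (R : DBC N) (ν ν' : Val N) : Prop :=
  ∀ (i j : Fin N) (c : ℤ), (∀ μ μ', Rs R μ μ' → μ' i - μ j ≤ c) → ν' i - ν j ≤ c

/- ## Corner decompositions -/

/-- The pumped path `η.μ^k.τ.μ'^k.η'`. -/
def pumped (η μ τ μ' η' : UPath N) (k : ℕ) : UPath N :=
  η.glue ((μ.pow k).glue (τ.glue ((μ'.pow k).glue η')))

/-- The decomposition `ρ' = η.μ.τ.μ'.η'` of a right corner as in the corner
shortening / decomposition lemma. -/
def DecompRight (ρ' : UPath N) : Prop :=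
  ∃ η μ τ μ' η' : UPath N,
    ρ' = η.append (μ.append (τ.append (μ'.append η'))) ∧
    μ.first = η.last ∧ τ.first = μ.last ∧ μ'.first = τ.last ∧ η'.first = μ'.last ∧
    μ.IsForward ∧ μ.IsRepeating ∧ μ'.IsBackward ∧ μ'.IsRepeating ∧
    τ.IsRightCorner ∧
    η.relLen = η'.relLen ∧
    1 ≤ μ.relLen ∧ μ.relLen = μ'.relLen ∧ μ.relLen ≤ (N : ℤ) ^ 2 ∧
    μ.weight + μ'.weight < 0 ∧
    ∀ k : ℕ,
      (pumped η μ τ μ' η' k).IsRightCorner ∧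
      (∀ θ : UPath N, θ.IsSubpath (η.glue (μ.pow k)) → ¬ θ.IsLBCorner) ∧
      (∀ θ : UPath N, θ.IsSubpath ((μ'.pow k).glue η') → ¬ θ.IsLBCorner)

/-- The decomposition `ρ' = η.μ.τ.μ'.η'` of a left corner as in the corner
shortening / decomposition lemma. -/
def DecompLeft (ρ' : UPath N) : Prop :=
  ∃ η μ τ μ' η' : UPath N,
    ρ' = η.append (μ.append (τ.append (μ'.append η'))) ∧
    μ.first = η.last ∧ τ.first = μ.last ∧ μ'.first = τ.last ∧ η'.first = μ'.last ∧
    μ.IsBackward ∧ μ.IsRepeating ∧ μ'.IsForward ∧ μ'.IsRepeating ∧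
    τ.IsLeftCorner ∧
    η.relLen = η'.relLen ∧
    1 ≤ μ.relLen ∧ μ.relLen = μ'.relLen ∧ μ.relLen ≤ (N : ℤ) ^ 2 ∧
    μ.weight + μ'.weight < 0 ∧
    ∀ k : ℕ,
      (pumped η μ τ μ' η' k).IsLeftCorner ∧
      (∀ θ : UPath N, θ.IsSubpath (η.glue (μ.pow k)) → ¬ θ.IsLBCorner) ∧
      (∀ θ : UPath N, θ.IsSubpath ((μ'.pow k).glue η') → ¬ θ.IsLBCorner)

/- ## Balanced closure -/

/-- Swap an unprimed-unprimed atom with its primed-primed counterpart. -/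
def flipAtom : Atom N → Atom N
  | (Sum.inl i, Sum.inl j, c) => (Sum.inr i, Sum.inr j, c)
  | (Sum.inr i, Sum.inr j, c) => (Sum.inl i, Sum.inl j, c)
  | a => a

/-- The balanced closure `R_b` of a DB constraint `R`. -/
def DBC.balClosure (R : DBC N) : DBC N := ⟨R.atoms ∪ R.atoms.image flipAtom⟩

/-!
Lay a solution of `ψ(n)` out along the positions of `G_R^{2N²+n}`: `R`-chains from `ν` to `μ`
on the lower padding `0, …, N²` and from `κ` to `ν'` on the upper padding `N² + n, …, 2N² + n`,
and an `R_fw`- and an `R_bw`-chain from `μ` to `κ` on the band `N², …, N² + n`. Evaluated by the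
padding chains, every edge inside a padding is satisfied (balancedness covers the edges within
an extreme copy), so it suffices to bound the excursions of `ρ` into the band. An excursion that
returns to the side it came from is a corner; normalization bounds its extent by `N²`, so the
`N²` steps witnessing `μ ∈ S_fw` (or `κ ∈ S_bw`) satisfy it. An excursion crossing the band is
cut at its last visit to each level: every piece is such a short corner followed by one step up
(or down), hence satisfied by every pair of `R_s`, hence by every step of `R_fw` (or `R_bw`).
-/

lemma List.exists_eq_append_cons_of_exists {α : Type*} {P : α → Prop} {l : List α}
    (h : ∃ x ∈ l, P x) : ∃ l₁ x l₂, l = l₁ ++ x :: l₂ ∧ P x ∧ ∀ y ∈ l₁, ¬ P y := by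
  induction l with
  | nil => simp at h
  | cons a l ih =>
    by_cases ha : P a
    · exact ⟨[], a, l, rfl, ha, by simp⟩
    obtain ⟨l₁, x, l₂, rfl, hx, hl₁⟩ := ih (by simpa [ha] using h)
    exact ⟨a :: l₁, x, l₂, rfl, hx, by simpa [ha] using hl₁⟩

namespace UPath

@[simp] lemma vertices_mk (u : Vtx N) (l : List (ℤ × Vtx N)) :
    (⟨u, l⟩ : UPath N).vertices = u :: l.map Prod.snd := rfl

@[simp] lemma weight_mk (u : Vtx N) (l : List (ℤ × Vtx N)) :
    (⟨u, l⟩ : UPath N).weight = (l.map Prod.fst).sum := rfl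

@[simp] lemma last_mk_nil (u : Vtx N) : (⟨u, []⟩ : UPath N).last = u := rfl

@[simp] lemma last_mk_cons (u : Vtx N) (s : ℤ × Vtx N) (l : List (ℤ × Vtx N)) :
    (⟨u, s :: l⟩ : UPath N).last = (⟨s.2, l⟩ : UPath N).last := by
  simp only [last, List.map_cons, List.getLastD_cons]

@[simp] lemma last_mk_append_cons (u : Vtx N) (l₁ : List (ℤ × Vtx N)) (s : ℤ × Vtx N)
    (l₂ : List (ℤ × Vtx N)) :
    (⟨u, l₁ ++ s :: l₂⟩ : UPath N).last = (⟨s.2, l₂⟩ : UPath N).last := by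
  induction l₁ generalizing u with
  | nil => exact last_mk_cons u s l₂
  | cons t l ih => simp [ih]

lemma last_mk_concat (u : Vtx N) (l : List (ℤ × Vtx N)) (s : ℤ × Vtx N) :
    (⟨u, l ++ [s]⟩ : UPath N).last = s.2 :=
  last_mk_append_cons u l s []

lemma first_mem_vertices (θ : UPath N) : θ.first ∈ θ.vertices := List.mem_cons_self

lemma last_mem_vertices (θ : UPath N) : θ.last ∈ θ.vertices := List.getLastD_mem_cons

lemma vertices_dropLast {θ : UPath N} (h : θ.steps ≠ []) :
    θ.vertices.dropLast = θ.first :: θ.steps.dropLast.map Prod.snd := by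
  rw [vertices, List.dropLast_cons_of_ne_nil (by simpa using h), List.map_dropLast]

lemma mem_posFinset {θ : UPath N} {t : ℤ} : t ∈ θ.posFinset ↔ ∃ x ∈ θ.vertices, x.1 = t := by
  simp [posFinset, posList]

lemma sub_le_extent {θ : UPath N} {x y : Vtx N} (hx : x ∈ θ.vertices) (hy : y ∈ θ.vertices) :
    x.1 - y.1 ≤ θ.extent :=
  sub_le_sub (Finset.le_max' _ _ (mem_posFinset.2 ⟨x, hx, rfl⟩))
    (Finset.min'_le _ _ (mem_posFinset.2 ⟨y, hy, rfl⟩))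

lemma EdgeChain.mono {E E' : Vtx N → Vtx N → ℤ → Prop} (hE : ∀ u v c, E u v c → E' u v c) :
    ∀ {u : Vtx N} {l : List (ℤ × Vtx N)}, EdgeChain E u l → EdgeChain E' u l
  | _, [], _ => trivial
  | _, _ :: _, ⟨he, hl⟩ => ⟨hE _ _ _ he, EdgeChain.mono hE hl⟩

lemma edgeChain_append {E : Vtx N → Vtx N → ℤ → Prop} {u : Vtx N} {l₁ l₂ : List (ℤ × Vtx N)} :
    EdgeChain E u (l₁ ++ l₂) ↔
      EdgeChain E u l₁ ∧ EdgeChain E (⟨u, l₁⟩ : UPath N).last l₂ := by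
  induction l₁ generalizing u with
  | nil => simp [EdgeChain]
  | cons s l ih => simp [EdgeChain, ih, and_assoc]

lemma vertices_mk_append_cons (u : Vtx N) (l₁ : List (ℤ × Vtx N)) (s : ℤ × Vtx N)
    (l₂ : List (ℤ × Vtx N)) :
    (⟨u, l₁ ++ s :: l₂⟩ : UPath N).vertices =
      (⟨u, l₁⟩ : UPath N).vertices ++ (⟨s.2, l₂⟩ : UPath N).vertices := by
  simp

lemma vertices_dropLast_mk_append_cons (u : Vtx N) (l₁ : List (ℤ × Vtx N)) (s : ℤ × Vtx N)
    (l₂ : List (ℤ × Vtx N)) :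
    (⟨u, l₁ ++ s :: l₂⟩ : UPath N).vertices.dropLast =
      (⟨u, l₁⟩ : UPath N).vertices ++ (⟨s.2, l₂⟩ : UPath N).vertices.dropLast := by
  rw [vertices_mk_append_cons, List.dropLast_append_of_ne_nil (by simp)]

lemma exists_split_last_visit (P : Vtx N → Prop) (θ : UPath N) (h : P θ.first) :
    ∃ l₁ l₂, θ.steps = l₁ ++ l₂ ∧ P (⟨θ.first, l₁⟩ : UPath N).last ∧ ∀ s ∈ l₂, ¬ P s.2 := by
  obtain ⟨u, l⟩ := θ
  induction l using List.reverseRecOn with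
  | nil => exact ⟨[], [], rfl, h, by simp⟩
  | append_singleton l s ih =>
    by_cases hs : P s.2
    · exact ⟨l ++ [s], [], by simp, by rwa [last_mk_concat], by simp⟩
    obtain ⟨l₁, l₂, rfl, h₁, h₂⟩ := ih h
    refine ⟨l₁, l₂ ++ [s], by simp, h₁, fun t ht => ?_⟩
    rcases List.mem_append.1 ht with ht | ht
    · exact h₂ t ht
    · rwa [List.mem_singleton.1 ht]

lemma IsSubpath.refl (ρ : UPath N) : ρ.IsSubpath ρ := ⟨[], [], by simp, rfl⟩

lemma IsSubpath.edgeChain {E : Vtx N → Vtx N → ℤ → Prop} {θ ρ : UPath N} (h : θ.IsSubpath ρ)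
    (hρ : EdgeChain E ρ.first ρ.steps) : EdgeChain E θ.first θ.steps := by
  obtain ⟨pre, post, hsteps, hfirst⟩ := h
  rw [hsteps, List.append_assoc, edgeChain_append, edgeChain_append] at hρ
  rw [hfirst]
  exact hρ.2.1

lemma IsSubpath.of_append {ρ : UPath N} {u : Vtx N} {l₁ l₂ : List (ℤ × Vtx N)}
    (h : (⟨u, l₁ ++ l₂⟩ : UPath N).IsSubpath ρ) : (⟨u, l₁⟩ : UPath N).IsSubpath ρ := by
  obtain ⟨pre, post, hsteps, hfirst⟩ := h
  exact ⟨pre, l₂ ++ post, by simp [hsteps], hfirst⟩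

lemma IsSubpath.of_append_cons {ρ : UPath N} {u : Vtx N} {l₁ l₂ : List (ℤ × Vtx N)}
    {s : ℤ × Vtx N} (h : (⟨u, l₁ ++ s :: l₂⟩ : UPath N).IsSubpath ρ) :
    (⟨u, l₁ ++ [s]⟩ : UPath N).IsSubpath ρ ∧ (⟨s.2, l₂⟩ : UPath N).IsSubpath ρ := by
  refine ⟨IsSubpath.of_append (l₂ := l₂) (by simpa using h), ?_⟩
  obtain ⟨pre, post, hsteps, hfirst⟩ := h
  exact ⟨pre ++ l₁ ++ [s], post, by simp [hsteps], (last_mk_concat _ _ _).symm⟩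

end UPath

namespace DBC

variable {R : DBC N}

lemma EdgeAt.pos {p : ℤ} {u v : Vtx N} {c : ℤ} (h : R.EdgeAt p u v c) :
    (u.1 = p ∨ u.1 = p + 1) ∧ (v.1 = p ∨ v.1 = p + 1) := by
  obtain ⟨s, t, -, rfl, rfl⟩ := h
  constructor
  · cases s <;> simp [endpt]
  · cases t <;> simp [endpt]

lemma Edge.abs_sub_le {u v : Vtx N} {c : ℤ} (h : R.Edge u v c) : |v.1 - u.1| ≤ 1 := by
  obtain ⟨p, hp⟩ := h
  rw [abs_le]
  rcases hp.pos with ⟨hu | hu, hv | hv⟩ <;> omega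

lemma EdgeN.edge {m : ℕ} {u v : Vtx N} {c : ℤ} (h : R.EdgeN m u v c) : R.Edge u v c :=
  let ⟨p, _, _, hp⟩ := h
  ⟨p, hp⟩

lemma EdgeN.mem_Icc {m : ℕ} {u v : Vtx N} {c : ℤ} (h : R.EdgeN m u v c) :
    (0 ≤ u.1 ∧ u.1 ≤ m) ∧ (0 ≤ v.1 ∧ v.1 ≤ m) := by
  obtain ⟨p, hp0, hpm, hp⟩ := h
  rcases hp.pos with ⟨hu | hu, hv | hv⟩ <;> omega

lemma Edge.mem_atoms_of_up {u v : Vtx N} {c : ℤ} (h : R.Edge u v c) (hd : v.1 = u.1 + 1) :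
    (Sum.inl u.2, Sum.inr v.2, c) ∈ R.atoms := by
  obtain ⟨p, s, t, hat, rfl, rfl⟩ := h
  cases s <;> cases t <;> simp only [endpt] at hd ⊢ <;> omega

lemma Edge.mem_atoms_of_down {u v : Vtx N} {c : ℤ} (h : R.Edge u v c) (hd : u.1 = v.1 + 1) :
    (Sum.inr u.2, Sum.inl v.2, c) ∈ R.atoms := by
  obtain ⟨p, s, t, hat, rfl, rfl⟩ := h
  cases s <;> cases t <;> simp only [endpt] at hd ⊢ <;> omega

lemma rel.sub_le_of_up {ν ν' : Val N} (h : R.rel ν ν') {u v : Vtx N} {c : ℤ} (he : R.Edge u v c)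
    (hd : v.1 = u.1 + 1) : ν u.2 - ν' v.2 ≤ c :=
  h _ (he.mem_atoms_of_up hd)

lemma rel.sub_le_of_down {ν ν' : Val N} (h : R.rel ν ν') {u v : Vtx N} {c : ℤ}
    (he : R.Edge u v c) (hd : u.1 = v.1 + 1) : ν' u.2 - ν v.2 ≤ c :=
  h _ (he.mem_atoms_of_down hd)

end DBC

lemma UPath.InUnfN.inUnf {R : DBC N} {m : ℕ} {ρ : UPath N} (h : ρ.InUnfN R m) : ρ.InUnf R :=
  UPath.EdgeChain.mono (fun _ _ _ => DBC.EdgeN.edge) h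

lemma UPath.InUnfN.mem_Icc {R : DBC N} {m : ℕ} {θ : UPath N} (h : θ.InUnfN R m)
    (hne : θ.steps ≠ []) : ∀ x ∈ θ.vertices, 0 ≤ x.1 ∧ x.1 ≤ m := by
  obtain ⟨u, l⟩ := θ
  induction l generalizing u with
  | nil => exact absurd rfl hne
  | cons s l ih =>
    have hs := h.1.mem_Icc
    intro x hx
    rcases List.mem_cons.1 hx with rfl | hx
    · exact hs.1
    rcases eq_or_ne l [] with rfl | hl
    · simp_all
    · exact ih s.2 h.2 hl x hx

def ChainOn (P : Val N → Val N → Prop) (W : ℤ → Val N) (lo hi : ℤ) : Prop :=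
  ∀ a, lo ≤ a → a < hi → P (W a) (W (a + 1))

lemma exists_chainOn_of_relPow {P : Val N → Val N → Prop} {k : ℕ} {ν ν' : Val N}
    (h : relPow P k ν ν') (lo : ℤ) :
    ∃ W : ℤ → Val N, W lo = ν ∧ W (lo + k) = ν' ∧ ChainOn P W lo (lo + k) := by
  induction k generalizing ν lo with
  | zero =>
    simp only [relPow] at h
    exact ⟨fun _ => ν, rfl, by simpa using h, fun a h₁ h₂ => by omega⟩
  | succ k ih =>
    obtain ⟨μ, hνμ, hμν'⟩ := h
    obtain ⟨W, hW₀, hWk, hW⟩ := ih hμν' (lo + 1)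
    refine ⟨Function.update W lo ν, by simp, ?_, ?_⟩
    · rw [Function.update_of_ne (by omega), ← hWk]
      push_cast
      ring_nf
    · intro a h₁ h₂
      rcases h₁.eq_or_lt with rfl | h₁
      · simpa [← hW₀] using hνμ
      · rw [Function.update_of_ne (by omega), Function.update_of_ne (by omega)]
        exact hW a (by omega) (by push_cast at h₂; omega)

namespace ChainOn

variable {R : DBC N} {W : ℤ → Val N} {lo hi : ℤ}

/-- Balancedness lets an edge within position `hi` (or `lo`) that comes from the copy outside
the chain be checked by the step of the chain next to it. -/
lemma sub_le_of_edge (hbal : R.Balanced) (hW : ChainOn R.rel W lo hi) (hlt : lo < hi)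
    {u v : Vtx N} {c : ℤ} (h : R.Edge u v c) (hu : lo ≤ u.1 ∧ u.1 ≤ hi)
    (hv : lo ≤ v.1 ∧ v.1 ≤ hi) : W u.1 u.2 - W v.1 v.2 ≤ c := by
  obtain ⟨p, s, t, hat, rfl, rfl⟩ := h
  cases s with
  | inl i =>
    cases t with
    | inl j =>
      simp only [endpt] at hu hv ⊢
      rcases hu.2.lt_or_eq with hp | rfl
      · exact hW p hu.1 hp _ hat
      · simpa [interp] using hW (p - 1) (by omega) (by omega) _ ((hbal i j c).1 hat)
    | inr j => exact hW p hu.1 (by simp only [endpt] at hv; omega) _ hat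
  | inr i =>
    cases t with
    | inl j => exact hW p hv.1 (by simp only [endpt] at hu; omega) _ hat
    | inr j =>
      simp only [endpt] at hu hv ⊢
      rcases le_or_gt lo p with hp | hp
      · exact hW p hp (by omega) _ hat
      · simpa [interp] using hW (p + 1) hu.1 (by omega) _ ((hbal i j c).2 hat)

lemma sub_le_weight (hbal : R.Balanced) (hW : ChainOn R.rel W lo hi) (hlt : lo < hi)
    {θ : UPath N} (hθ : θ.InUnf R) (hpos : ∀ x ∈ θ.vertices, lo ≤ x.1 ∧ x.1 ≤ hi) :
    W θ.first.1 θ.first.2 - W θ.last.1 θ.last.2 ≤ θ.weight := by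
  obtain ⟨u, l⟩ := θ
  induction l generalizing u with
  | nil => simp
  | cons s l ih =>
    have h₁ := hW.sub_le_of_edge hbal hlt hθ.1 (hpos u (by simp)) (hpos s.2 (by simp))
    have h₂ := ih s.2 hθ.2 (fun x hx => hpos x (List.mem_cons_of_mem _ hx))
    simp only [UPath.last_mk_cons, UPath.weight_mk, List.map_cons, List.sum_cons] at h₂ ⊢
    linarith

end ChainOn

section

variable {R : DBC N}

lemma Sfw.sub_le_weight (hbal : R.Balanced) {μ : Val N} (hμ : Sfw R μ) {θ : UPath N}
    (hθ : θ.InUnf R) {a : ℤ} (hfirst : θ.first.1 = a) (hlast : θ.last.1 = a)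
    (hpos : ∀ x ∈ θ.vertices, a ≤ x.1 ∧ x.1 ≤ a + N ^ 2) :
    μ θ.first.2 - μ θ.last.2 ≤ θ.weight := by
  obtain ⟨ν, hν⟩ := hμ
  obtain ⟨W, hWa, -, hW⟩ := exists_chainOn_of_relPow hν a
  have hN := θ.first.2.pos
  have := hW.sub_le_weight hbal (by push_cast; linarith [pow_pos (Int.natCast_pos.2 hN) 2]) hθ
    (by push_cast; exact hpos)
  rwa [hfirst, hlast, hWa] at this

lemma Sbw.sub_le_weight (hbal : R.Balanced) {κ : Val N} (hκ : Sbw R κ) {θ : UPath N}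
    (hθ : θ.InUnf R) {a : ℤ} (hfirst : θ.first.1 = a) (hlast : θ.last.1 = a)
    (hpos : ∀ x ∈ θ.vertices, a - N ^ 2 ≤ x.1 ∧ x.1 ≤ a) :
    κ θ.first.2 - κ θ.last.2 ≤ θ.weight := by
  obtain ⟨ν, hν⟩ := hκ
  obtain ⟨W, -, hWa, hW⟩ := exists_chainOn_of_relPow hν (a - N ^ 2)
  push_cast at hWa hW
  rw [sub_add_cancel] at hWa hW
  have hN := θ.first.2.pos
  have := hW.sub_le_weight hbal (by linarith [pow_pos (Int.natCast_pos.2 hN) 2]) hθ hpos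
  rwa [hfirst, hlast, hWa] at this

/-- Every pair of `R_s` satisfies this bound, through the `N²` steps witnessing `S_fw` of its
first component; `R_fw` is by definition the strongest such one-directional relation. -/
lemma Rfw.sub_le_weight (hbal : R.Balanced) {ν ν' : Val N} (h : Rfw R ν ν') {θ : UPath N}
    (hθ : θ.InUnf R) {a : ℤ} (hfirst : θ.first.1 = a) (hlast : θ.last.1 = a)
    (hpos : ∀ x ∈ θ.vertices, a ≤ x.1 ∧ x.1 ≤ a + N ^ 2) {c : ℤ} {w : Vtx N}
    (he : R.Edge θ.last w c) (hw : w.1 = a + 1) :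
    ν θ.first.2 - ν' w.2 ≤ θ.weight + c :=
  h _ _ _ fun _ _ ⟨hrel, hμ, _⟩ => by
    have := hμ.sub_le_weight hbal hθ hfirst hlast hpos
    have := hrel.sub_le_of_up he (by rw [hw, hlast])
    linarith

lemma Rbw.sub_le_weight (hbal : R.Balanced) {ν ν' : Val N} (h : Rbw R ν ν') {θ : UPath N}
    (hθ : θ.InUnf R) {a : ℤ} (hfirst : θ.first.1 = a) (hlast : θ.last.1 = a)
    (hpos : ∀ x ∈ θ.vertices, a - N ^ 2 ≤ x.1 ∧ x.1 ≤ a) {c : ℤ} {w : Vtx N}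
    (he : R.Edge θ.last w c) (hw : w.1 = a - 1) :
    ν' θ.first.2 - ν w.2 ≤ θ.weight + c :=
  h _ _ _ fun _ _ ⟨hrel, _, hμ'⟩ => by
    have := hμ'.sub_le_weight hbal hθ hfirst hlast hpos
    have := hrel.sub_le_of_down he (by rw [hw, hlast]; ring)
    linarith

end

namespace UPath

variable {R : DBC N}

lemma exists_mem_vertices_of_mem_uIcc {θ : UPath N} (hθ : θ.InUnf R) {x : Vtx N}
    (hx : x ∈ θ.vertices) {t : ℤ} (ht : t ∈ Set.uIcc θ.first.1 x.1) :
    ∃ y ∈ θ.vertices, y.1 = t := by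
  obtain ⟨u, l⟩ := θ
  induction l generalizing u with
  | nil =>
    obtain rfl : x = u := by simpa using hx
    exact ⟨x, by simp, (by simpa using ht : t = x.1).symm⟩
  | cons s l ih =>
    have hs : |s.2.1 - u.1| ≤ 1 := hθ.1.abs_sub_le
    rw [abs_le] at hs
    simp only [Set.mem_uIcc] at ht
    rcases List.mem_cons.1 hx with rfl | hx
    · exact ⟨x, by simp, by omega⟩
    rcases eq_or_ne t u.1 with rfl | htu
    · exact ⟨u, by simp, rfl⟩
    obtain ⟨y, hy, hyt⟩ := ih s.2 hθ.2 hx (Set.mem_uIcc.2 (by dsimp only; omega))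
    exact ⟨y, List.mem_cons_of_mem _ hy, hyt⟩

lemma isCorner_of_one_sided {θ : UPath N} (hθ : θ.InUnf R) (hne : θ.steps ≠ [])
    (hvert : θ.last.1 = θ.first.1)
    (hside : (∀ x ∈ θ.vertices, θ.first.1 ≤ x.1) ∨ ∀ x ∈ θ.vertices, x.1 ≤ θ.first.1) :
    θ.IsCorner := by
  rcases hside with hside | hside
  · obtain ⟨x, hx, hxM⟩ := mem_posFinset.1 (θ.posFinset.max'_mem θ.posFinset_nonempty)
    refine Or.inl ⟨hne, hvert, (x.1 - θ.first.1).toNat, Finset.ext fun t => ?_⟩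
    rw [Finset.mem_Icc, mem_posFinset, Int.toNat_of_nonneg (by linarith [hside x hx]),
      add_sub_cancel]
    constructor
    · rintro ⟨y, hy, rfl⟩
      exact ⟨hside y hy, hxM ▸ Finset.le_max' _ _ (mem_posFinset.2 ⟨y, hy, rfl⟩)⟩
    · exact fun ht => exists_mem_vertices_of_mem_uIcc hθ hx (Set.mem_uIcc.2 (Or.inl ht))
  · obtain ⟨x, hx, hxm⟩ := mem_posFinset.1 (θ.posFinset.min'_mem θ.posFinset_nonempty)
    refine Or.inr ⟨hne, hvert, (θ.first.1 - x.1).toNat, Finset.ext fun t => ?_⟩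
    rw [Finset.mem_Icc, mem_posFinset, Int.toNat_of_nonneg (by linarith [hside x hx]),
      sub_sub_cancel]
    constructor
    · rintro ⟨y, hy, rfl⟩
      exact ⟨hxm ▸ Finset.min'_le _ _ (mem_posFinset.2 ⟨y, hy, rfl⟩), hside y hy⟩
    · exact fun ht => exists_mem_vertices_of_mem_uIcc hθ hx (Set.mem_uIcc.2 (Or.inr ht))

lemma IsNormalized.abs_sub_first_le {m : ℕ} {ρ θ : UPath N} (hnorm : ρ.IsNormalized m)
    (hρ : ρ.InUnf R) (hθ : θ.IsSubpath ρ) (hvert : θ.last.1 = θ.first.1)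
    (hband : ∀ x ∈ θ.vertices, N ^ 2 ≤ x.1 ∧ x.1 ≤ m - N ^ 2)
    (hside : (∀ x ∈ θ.vertices, θ.first.1 ≤ x.1) ∨ ∀ x ∈ θ.vertices, x.1 ≤ θ.first.1) :
    ∀ x ∈ θ.vertices, |x.1 - θ.first.1| ≤ N ^ 2 := by
  rcases eq_or_ne θ.steps [] with hne | hne
  · intro x hx
    obtain rfl : x = θ.first := by simpa [vertices, hne] using hx
    simp
  have hext : θ.extent ≤ N ^ 2 := by
    refine not_lt.1 fun hlong => hnorm θ hθ (fun t ht => ?_)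
      ⟨isCorner_of_one_sided (hθ.edgeChain hρ) hne hvert hside, hlong⟩
    obtain ⟨x, hx, rfl⟩ := mem_posFinset.1 ht
    exact Finset.mem_Icc.2 (hband x hx)
  intro x hx
  have := sub_le_extent hx θ.first_mem_vertices
  have := sub_le_extent θ.first_mem_vertices hx
  rw [abs_le]
  constructor <;> linarith

lemma exists_last_visit_step {θ : UPath N} (hθ : θ.InUnf R) (ℓ : Vtx N → ℤ)
    (hℓ : ∀ u v c, R.Edge u v c → ℓ v ≤ ℓ u + 1) (hlow : ∀ x ∈ θ.vertices, ℓ θ.first ≤ ℓ x)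
    (hlast : ℓ θ.last ≠ ℓ θ.first) :
    ∃ Q c w l, θ.steps = Q ++ (c, w) :: l ∧ ℓ (⟨θ.first, Q⟩ : UPath N).last = ℓ θ.first ∧
      ℓ w = ℓ θ.first + 1 ∧ ∀ x ∈ (⟨w, l⟩ : UPath N).vertices, ℓ w ≤ ℓ x := by
  obtain ⟨u, l⟩ := θ
  obtain ⟨Q, _ | ⟨⟨c, w⟩, l⟩, rfl, hQ, hl⟩ :=
    exists_split_last_visit (fun x => ℓ x = ℓ u) ⟨u, l⟩ rfl
  · simp only [List.append_nil] at hQ hlast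
    exact absurd hQ hlast
  dsimp only at hlow hQ hl ⊢
  have hw : ℓ w = ℓ u + 1 := by
    have := hℓ _ _ _ (edgeChain_append.1 hθ).2.1
    have := hlow w (by simp)
    have := hl (c, w) (by simp)
    dsimp only at *
    omega
  refine ⟨Q, c, w, l, rfl, hQ, hw, fun x hx => ?_⟩
  have hx' := hlow x (by rw [vertices_mk_append_cons]; exact List.mem_append_right _ hx)
  rcases List.mem_cons.1 hx with rfl | hx
  · exact le_rfl
  obtain ⟨t, ht, rfl⟩ := List.mem_map.1 hx
  have := hl t (List.mem_cons_of_mem _ ht)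
  omega

/-- `ℓ` is the position or its negative. Cutting the walk at its last visit to each level leaves
chunks that stay at or above their level, return to it, and then step one level up. -/
theorem sub_le_weight_of_levels {ρ : UPath N} (hρ : ρ.InUnf R)
    (ℓ : Vtx N → ℤ) (hℓ : ∀ u v c, R.Edge u v c → ℓ v ≤ ℓ u + 1)
    (Φ : ℤ → Vtx N → ℤ) {a b : ℤ}
    (hcross : ∀ (θ : UPath N) (c : ℤ) (w : Vtx N),
      (⟨θ.first, θ.steps ++ [(c, w)]⟩ : UPath N).IsSubpath ρ → a ≤ ℓ θ.first →
      ℓ θ.last = ℓ θ.first → ℓ w = ℓ θ.first + 1 →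
      (∀ x ∈ θ.vertices, ℓ θ.first ≤ ℓ x ∧ ℓ x < b) →
      Φ (ℓ θ.first) θ.first - Φ (ℓ θ.first + 1) w ≤ θ.weight + c)
    {θ : UPath N} (hθ : θ.IsSubpath ρ) (ha : a ≤ ℓ θ.first) (hb : ℓ θ.last = b)
    (hlow : ∀ x ∈ θ.vertices, ℓ θ.first ≤ ℓ x) (hhigh : ∀ x ∈ θ.vertices.dropLast, ℓ x < b) :
    Φ (ℓ θ.first) θ.first - Φ b θ.last ≤ θ.weight := by
  obtain ⟨d, hd⟩ : ∃ d : ℕ, b - ℓ θ.first = d :=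
    ⟨(b - ℓ θ.first).toNat, by have := hlow _ θ.last_mem_vertices; omega⟩
  induction d generalizing θ with
  | zero =>
    obtain ⟨u, _ | ⟨s, l⟩⟩ := θ
    · simp only [last_mk_nil] at hb ⊢
      simp [hb]
    · exact absurd (hhigh u (by simp)) (by simp only at hd; omega)
  | succ d ih =>
    obtain ⟨Q, c, w, l, hsteps, hQ, hw, hlow'⟩ :=
      exists_last_visit_step (hθ.edgeChain hρ) ℓ hℓ hlow (by omega)
    obtain ⟨u, _⟩ := θ
    dsimp only at hsteps ha hd hQ hw
    subst hsteps
    have hsub := hθ.of_append_cons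
    have h₁ := hcross ⟨u, Q⟩ c w hsub.1 ha hQ hw fun x hx =>
      ⟨hlow x (by rw [vertices_mk_append_cons]; exact List.mem_append_left _ hx),
        hhigh x (by rw [vertices_dropLast_mk_append_cons]; exact List.mem_append_left _ hx)⟩
    have h₂ : Φ (ℓ w) w - Φ b (⟨w, l⟩ : UPath N).last ≤ (⟨w, l⟩ : UPath N).weight :=
      ih hsub.2 (by dsimp only; omega) (by simpa using hb) hlow'
        (fun x hx => hhigh x (by
          rw [vertices_dropLast_mk_append_cons]; exact List.mem_append_right _ hx))
        (by dsimp only; omega)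
    simp only [weight_mk, last_mk_append_cons, List.map_append, List.map_cons,
      List.sum_append, List.sum_cons] at h₁ h₂ ⊢
    rw [hw] at h₂
    linarith

/-- A walk between two vertices of `O` is the concatenation of its `O`-excursions: nonempty
walks between vertices of `O` with no inner vertex in `O`. -/
theorem sub_le_weight_of_excursions {ρ : UPath N} (O : Vtx N → Prop) (V : Vtx N → ℤ)
    (hexc : ∀ θ : UPath N, θ.IsSubpath ρ → θ.steps ≠ [] → O θ.first → O θ.last →
      (∀ s ∈ θ.steps.dropLast, ¬ O s.2) → V θ.first - V θ.last ≤ θ.weight)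
    {θ : UPath N} (hθ : θ.IsSubpath ρ) (hfirst : O θ.first) (hlast : O θ.last) :
    V θ.first - V θ.last ≤ θ.weight := by
  obtain ⟨u, l⟩ := θ
  induction hk : l.length using Nat.strong_induction_on generalizing u l with
  | _ k ih =>
  rcases eq_or_ne l [] with rfl | hne
  · simp
  have hex : ∃ s ∈ l, O s.2 := by
    obtain ⟨l', t, rfl⟩ := (List.eq_nil_or_concat l).resolve_left hne
    exact ⟨t, by simp, by simpa [last_mk_concat] using hlast⟩
  obtain ⟨l₁, s, l₂, rfl, hs, hl₁⟩ := List.exists_eq_append_cons_of_exists hex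
  have hsub := hθ.of_append_cons
  have h₁ := hexc _ hsub.1 (by simp) hfirst (by rwa [last_mk_concat])
    (by rwa [List.dropLast_concat])
  have h₂ := ih l₂.length (by simp [← hk]; omega) s.2 l₂ hsub.2 hs (by simpa using hlast) rfl
  simp only [weight_mk, last_mk_append_cons, last_mk_nil, List.map_append, List.map_cons,
    List.map_nil, List.sum_append, List.sum_cons, List.sum_nil] at h₁ h₂ ⊢
  linarith

lemma excursion_trichotomy {θ : UPath N} (hθ : θ.InUnf R) (hne : θ.steps ≠ []) {A B : ℤ}
    (hfirst : θ.first.1 ≤ A ∨ B ≤ θ.first.1) (hlast : θ.last.1 ≤ A ∨ B ≤ θ.last.1)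
    (hinner : ∀ s ∈ θ.steps.dropLast, A < s.2.1 ∧ s.2.1 < B) :
    (∀ x ∈ θ.vertices, x.1 ≤ A) ∨ (∀ x ∈ θ.vertices, B ≤ x.1) ∨
      (A < B ∧ (θ.first.1 = A ∨ θ.first.1 = B) ∧ (θ.last.1 = A ∨ θ.last.1 = B) ∧
        ∀ x ∈ θ.vertices, A ≤ x.1 ∧ x.1 ≤ B) := by
  obtain ⟨u, l⟩ := θ
  obtain ⟨l, t, rfl⟩ := (List.eq_nil_or_concat l).resolve_left hne
  simp only [List.concat_eq_append, List.dropLast_concat, last_mk_concat] at hθ hinner hlast ⊢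
  dsimp only at hfirst
  have hedges := edgeChain_append.1 hθ
  have ht := abs_le.1 hedges.2.1.abs_sub_le
  rcases l with _ | ⟨s, l⟩
  · simp only [last_mk_nil] at ht
    simp only [vertices_mk, List.nil_append, List.map_cons, List.map_nil, List.mem_cons,
      List.not_mem_nil, or_false, forall_eq_or_imp, forall_eq]
    omega
  have hs := abs_le.1 hedges.1.1.abs_sub_le
  have hin : ∀ x ∈ (⟨s.2, l⟩ : UPath N).vertices, A < x.1 ∧ x.1 < B := by
    intro x hx
    rcases List.mem_cons.1 hx with rfl | hx
    · exact hinner s List.mem_cons_self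
    obtain ⟨r, hr, rfl⟩ := List.mem_map.1 hx
    exact hinner r (List.mem_cons_of_mem _ hr)
  have hpen := hin _ (last_mem_vertices _)
  have hs₂ := hin s.2 (first_mem_vertices _)
  simp only [last_mk_cons] at ht
  simp only at hs hfirst
  refine Or.inr (Or.inr ⟨by omega, by omega, by omega, ?_⟩)
  simp only [vertices_mk, List.cons_append, List.map_cons, List.map_append, List.mem_cons,
    List.mem_append, List.map_nil, List.not_mem_nil, or_false]
  rintro x (rfl | rfl | hx | rfl)
  · omega
  · omega
  · have := hin x (List.mem_cons_of_mem _ hx)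
    omega
  · omega

end UPath

/-- A solution of `ψ(n)` laid out along the positions `0, …, 2N² + n` of `G_R^{2N²+n}`:
`R`-chains on the paddings `0, …, N²` and `N² + n, …, 2N² + n`, and an `R_fw`-chain and an
`R_bw`-chain on the band `N², …, N² + n` that agree with the paddings at its ends. -/
structure Layout (R : DBC N) (n : ℕ) where
  low : ℤ → Val N
  high : ℤ → Val N
  fw : ℤ → Val N
  bw : ℤ → Val N
  low_chain : ChainOn R.rel low 0 (N ^ 2)
  high_chain : ChainOn R.rel high (N ^ 2 + n) (2 * N ^ 2 + n)
  fw_chain : ChainOn (Rfw R) fw (N ^ 2) (N ^ 2 + n)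
  bw_chain : ChainOn (Rbw R) bw (N ^ 2) (N ^ 2 + n)
  fw_left : fw (N ^ 2) = low (N ^ 2)
  bw_left : bw (N ^ 2) = low (N ^ 2)
  fw_right : fw (N ^ 2 + n) = high (N ^ 2 + n)
  bw_right : bw (N ^ 2 + n) = high (N ^ 2 + n)
  sfw : Sfw R (low (N ^ 2))
  sbw : Sbw R (high (N ^ 2 + n))

namespace Layout

variable {R : DBC N} {n : ℕ} (M : Layout R n)

lemma exists_of_relPow {ν μ κ ν' : Val N} (hνμ : relPow R.rel (N ^ 2) ν μ)
    (hfw : relPow (Rfw R) n μ κ) (hbw : relPow (Rbw R) n μ κ) (hμ : Sfw R μ) (hκ : Sbw R κ)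
    (hκν' : relPow R.rel (N ^ 2) κ ν') :
    ∃ M : Layout R n, M.low 0 = ν ∧ M.high (2 * N ^ 2 + n) = ν' := by
  obtain ⟨L, hL₀, hL₁, hL⟩ := exists_chainOn_of_relPow hνμ 0
  obtain ⟨F, hF₀, hF₁, hF⟩ := exists_chainOn_of_relPow hfw (N ^ 2)
  obtain ⟨G, hG₀, hG₁, hG⟩ := exists_chainOn_of_relPow hbw (N ^ 2)
  obtain ⟨H, hH₀, hH₁, hH⟩ := exists_chainOn_of_relPow hκν' (N ^ 2 + n)
  have e : (N : ℤ) ^ 2 + n + (N ^ 2 : ℕ) = 2 * N ^ 2 + n := by push_cast; ring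
  rw [e] at hH₁ hH
  push_cast at hL₁ hL
  rw [zero_add] at hL₁ hL
  exact ⟨⟨L, H, F, G, hL, hH, hF, hG, hF₀.trans hL₁.symm, hG₀.trans hL₁.symm,
    hF₁.trans hH₀.symm, hG₁.trans hH₀.symm, hL₁ ▸ hμ, hH₀ ▸ hκ⟩, hL₀, hH₁⟩

/-- Only meaningful on the two paddings. -/
def pot (x : Vtx N) : ℤ := if x.1 ≤ N ^ 2 then M.low x.1 x.2 else M.high x.1 x.2

lemma pot_of_le {x : Vtx N} (hx : x.1 ≤ N ^ 2) : M.pot x = M.low x.1 x.2 := if_pos hx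

/-- For `n = 0` the two paddings meet at `N²`, where `low` and `high` agree through `fw`. -/
lemma pot_of_ge {x : Vtx N} (hx : N ^ 2 + n ≤ x.1) : M.pot x = M.high x.1 x.2 := by
  unfold pot
  split_ifs with h
  · obtain rfl : n = 0 := by omega
    obtain ⟨a, k⟩ := x
    obtain rfl : a = N ^ 2 := by simp only at hx h; omega
    have := M.fw_right
    rw [Nat.cast_zero, add_zero, M.fw_left] at this
    rw [this]
  · rfl

variable {ρ : UPath N}

lemma fw_sub_le_weight (hbal : R.Balanced) (hρ : ρ.InUnf R)
    (hnorm : ρ.IsNormalized (2 * N ^ 2 + n)) {θ : UPath N} (hθ : θ.IsSubpath ρ)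
    (hfirst : θ.first.1 = N ^ 2) (hlast : θ.last.1 = N ^ 2 + n)
    (hlow : ∀ x ∈ θ.vertices, N ^ 2 ≤ x.1) (hhigh : ∀ x ∈ θ.vertices.dropLast, x.1 < N ^ 2 + n) :
    M.fw (N ^ 2) θ.first.2 - M.fw (N ^ 2 + n) θ.last.2 ≤ θ.weight := by
  have := UPath.sub_le_weight_of_levels hρ Prod.fst
    (fun u v c h => by linarith [(abs_le.1 h.abs_sub_le).2]) (fun k x => M.fw k x.2)
    (a := N ^ 2) ?_ hθ hfirst.ge hlast (by rwa [hfirst]) hhigh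
  · rwa [hfirst] at this
  intro θ c w hsub ha hvert hw hpos
  have hedges := UPath.edgeChain_append.1 (hsub.edgeChain hρ)
  have hclose := hnorm.abs_sub_first_le hρ hsub.of_append hvert
    (fun x hx => ⟨by linarith [(hpos x hx).1], by push_cast; linarith [(hpos x hx).2]⟩)
    (Or.inl fun x hx => (hpos x hx).1)
  exact (M.fw_chain _ ha (hpos _ θ.first_mem_vertices).2).sub_le_weight (θ := θ) hbal hedges.1
    rfl hvert (fun x hx => ⟨(hpos x hx).1, by linarith [(abs_le.1 (hclose x hx)).2]⟩)
    hedges.2.1 hw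

lemma bw_sub_le_weight (hbal : R.Balanced) (hρ : ρ.InUnf R)
    (hnorm : ρ.IsNormalized (2 * N ^ 2 + n)) {θ : UPath N} (hθ : θ.IsSubpath ρ)
    (hfirst : θ.first.1 = N ^ 2 + n) (hlast : θ.last.1 = N ^ 2)
    (hhigh : ∀ x ∈ θ.vertices, x.1 ≤ N ^ 2 + n) (hlow : ∀ x ∈ θ.vertices.dropLast, N ^ 2 < x.1) :
    M.bw (N ^ 2 + n) θ.first.2 - M.bw (N ^ 2) θ.last.2 ≤ θ.weight := by
  have := UPath.sub_le_weight_of_levels hρ (fun x => -x.1)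
    (fun u v c h => by linarith [(abs_le.1 h.abs_sub_le).1]) (fun k x => M.bw (-k) x.2)
    (a := -(N ^ 2 + n)) (b := -N ^ 2) ?_ hθ (by rw [hfirst]) (by rw [hlast])
    (by rw [hfirst]; exact fun x hx => neg_le_neg (hhigh x hx))
    (fun x hx => neg_lt_neg (hlow x hx))
  · simpa [hfirst] using this
  intro θ c w hsub ha hvert hw hpos
  simp only [neg_inj, neg_le_neg_iff, neg_lt_neg_iff] at ha hvert hw hpos
  have hedges := UPath.edgeChain_append.1 (hsub.edgeChain hρ)
  have hclose := hnorm.abs_sub_first_le hρ hsub.of_append hvert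
    (fun x hx => ⟨by linarith [(hpos x hx).2], by push_cast; linarith [(hpos x hx).1]⟩)
    (Or.inr fun x hx => (hpos x hx).1)
  have hlt := (hpos _ θ.first_mem_vertices).2
  have := (M.bw_chain (θ.first.1 - 1) (by linarith) (by linarith)).sub_le_weight (θ := θ) hbal
    hedges.1 rfl hvert (fun x hx => ⟨by linarith [(abs_le.1 (hclose x hx)).1], (hpos x hx).1⟩)
    hedges.2.1 (by linarith)
  rw [sub_add_cancel] at this
  simpa [neg_add_eq_sub, ← sub_eq_neg_add] using this

lemma pot_sub_le_of_band (hbal : R.Balanced) (hρ : ρ.InUnf R)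
    (hnorm : ρ.IsNormalized (2 * N ^ 2 + n)) {θ : UPath N} (hθ : θ.IsSubpath ρ) (hne : θ.steps ≠ [])
    (hlt : (N : ℤ) ^ 2 < N ^ 2 + n)
    (hfirst : θ.first.1 = N ^ 2 ∨ θ.first.1 = N ^ 2 + n)
    (hlast : θ.last.1 = N ^ 2 ∨ θ.last.1 = N ^ 2 + n)
    (hband : ∀ x ∈ θ.vertices, N ^ 2 ≤ x.1 ∧ x.1 ≤ N ^ 2 + n)
    (hinner : ∀ s ∈ θ.steps.dropLast, N ^ 2 < s.2.1 ∧ s.2.1 < N ^ 2 + n) :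
    M.pot θ.first - M.pot θ.last ≤ θ.weight := by
  have hθR := hθ.edgeChain hρ
  have hdrop : ∀ x ∈ θ.vertices.dropLast, x = θ.first ∨ N ^ 2 < x.1 ∧ x.1 < N ^ 2 + n := by
    intro x hx
    rw [UPath.vertices_dropLast hne, List.mem_cons, List.mem_map] at hx
    obtain rfl | ⟨s, hs, rfl⟩ := hx
    exacts [Or.inl rfl, Or.inr (hinner s hs)]
  have hclose := fun hvert hside => hnorm.abs_sub_first_le hρ hθ hvert (fun x hx =>
    ⟨(hband x hx).1, by push_cast; linarith [(hband x hx).2]⟩) hside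
  rcases hfirst with hfirst | hfirst <;> rcases hlast with hlast | hlast
  · rw [M.pot_of_le hfirst.le, M.pot_of_le hlast.le, hfirst, hlast]
    have hclose := hclose (hlast.trans hfirst.symm) (Or.inl fun x hx => hfirst ▸ (hband x hx).1)
    exact M.sfw.sub_le_weight hbal hθR hfirst hlast fun x hx =>
      ⟨(hband x hx).1, by linarith [(abs_le.1 (hclose x hx)).2]⟩
  · rw [M.pot_of_le hfirst.le, M.pot_of_ge hlast.ge, hfirst, hlast, ← M.fw_left, ← M.fw_right]
    exact M.fw_sub_le_weight hbal hρ hnorm hθ hfirst hlast (fun x hx => (hband x hx).1)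
      fun x hx => by rcases hdrop x hx with rfl | h <;> linarith
  · rw [M.pot_of_ge hfirst.ge, M.pot_of_le hlast.le, hfirst, hlast, ← M.bw_left, ← M.bw_right]
    exact M.bw_sub_le_weight hbal hρ hnorm hθ hfirst hlast (fun x hx => (hband x hx).2)
      fun x hx => by rcases hdrop x hx with rfl | h <;> linarith
  · rw [M.pot_of_ge hfirst.ge, M.pot_of_ge hlast.ge, hfirst, hlast]
    have hclose := hclose (hlast.trans hfirst.symm) (Or.inr fun x hx => hfirst ▸ (hband x hx).2)
    exact M.sbw.sub_le_weight hbal hθR hfirst hlast fun x hx =>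
      ⟨by linarith [(abs_le.1 (hclose x hx)).1], (hband x hx).2⟩

theorem pot_sub_le_weight (hbal : R.Balanced) (hρ : ρ.InUnfN R (2 * N ^ 2 + n))
    (hnorm : ρ.IsNormalized (2 * N ^ 2 + n)) {θ : UPath N} (hθ : θ.IsSubpath ρ)
    (hfirst : θ.first.1 ≤ N ^ 2 ∨ N ^ 2 + n ≤ θ.first.1)
    (hlast : θ.last.1 ≤ N ^ 2 ∨ N ^ 2 + n ≤ θ.last.1) :
    M.pot θ.first - M.pot θ.last ≤ θ.weight := by
  refine UPath.sub_le_weight_of_excursions (fun x => x.1 ≤ N ^ 2 ∨ N ^ 2 + n ≤ x.1) M.pot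
    (fun θ hθ hne h₁ h₂ hinner => ?_) hθ hfirst hlast
  have hθN : θ.InUnfN R (2 * N ^ 2 + n) := hθ.edgeChain hρ
  have hrange := hθN.mem_Icc hne
  have hN : (0 : ℤ) < N ^ 2 := by have := θ.first.2.pos; positivity
  rcases UPath.excursion_trichotomy hθN.inUnf hne h₁ h₂ (fun s hs => by
    have := hinner s hs; omega) with hlow | hhigh | ⟨hlt, hf, hl, hband⟩
  · rw [M.pot_of_le (hlow _ θ.first_mem_vertices), M.pot_of_le (hlow _ θ.last_mem_vertices)]
    exact M.low_chain.sub_le_weight hbal hN hθN.inUnf fun x hx => ⟨(hrange x hx).1, hlow x hx⟩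
  · rw [M.pot_of_ge (hhigh _ θ.first_mem_vertices), M.pot_of_ge (hhigh _ θ.last_mem_vertices)]
    exact M.high_chain.sub_le_weight hbal (by linarith) hθN.inUnf fun x hx =>
      ⟨hhigh x hx, by push_cast at hrange; exact (hrange x hx).2⟩
  · exact M.pot_sub_le_of_band hbal hρ.inUnf hnorm hθ hne hlt hf hl hband fun s hs => by
      have := hinner s hs; omega

end Layout

theorem statement18_general (N : ℕ) (R : DBC N) (hbal : R.Balanced)
    (n : ℕ) (ρ : UPath N) (i j : Fin N) (p q : ℤ)
    (hp : p = 0 ∨ p = ((2 * N ^ 2 + n : ℕ) : ℤ))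
    (hq : q = 0 ∨ q = ((2 * N ^ 2 + n : ℕ) : ℤ))
    (hf : ρ.first = (p, i)) (hl : ρ.last = (q, j))
    (hρ : ρ.InUnfN R (2 * N ^ 2 + n))
    (hnorm : ρ.IsNormalized (2 * N ^ 2 + n)) :
    ∀ ν ν' : Val N,
      (∃ μ κ : Val N, relPow R.rel (N ^ 2) ν μ ∧ relPow (Rfw R) n μ κ ∧
        relPow (Rbw R) n μ κ ∧ Sfw R μ ∧ Sbw R κ ∧ relPow R.rel (N ^ 2) κ ν') →
      (p = 0 ∧ q = ((2 * N ^ 2 + n : ℕ) : ℤ) → ν i - ν' j ≤ ρ.weight) ∧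
      (p = ((2 * N ^ 2 + n : ℕ) : ℤ) ∧ q = 0 → ν' i - ν j ≤ ρ.weight) ∧
      (p = 0 ∧ q = 0 → ν i - ν j ≤ ρ.weight) ∧
      (p = ((2 * N ^ 2 + n : ℕ) : ℤ) ∧ q = ((2 * N ^ 2 + n : ℕ) : ℤ) →
        ν' i - ν' j ≤ ρ.weight) := by
  rintro ν ν' ⟨μ, κ, hνμ, hfw, hbw, hμ, hκ, hκν'⟩
  obtain ⟨M, hν, hν'⟩ := Layout.exists_of_relPow hνμ hfw hbw hμ hκ hκν'
  have hm : ((2 * N ^ 2 + n : ℕ) : ℤ) = 2 * N ^ 2 + n := by push_cast; ring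
  have hextremal : ∀ r : ℤ, r = 0 ∨ r = ((2 * N ^ 2 + n : ℕ) : ℤ) → r ≤ N ^ 2 ∨ N ^ 2 + n ≤ r := by
    rintro r (rfl | rfl)
    · exact Or.inl (by positivity)
    · exact Or.inr (by rw [hm]; nlinarith)
  have key := M.pot_sub_le_weight hbal hρ hnorm (UPath.IsSubpath.refl ρ)
    (by rw [hf]; exact hextremal p hp) (by rw [hl]; exact hextremal q hq)
  have hpot₀ : ∀ k, M.pot (0, k) = ν k := fun k => by
    rw [M.pot_of_le (by positivity), hν]
  have hpotₘ : ∀ k, M.pot (((2 * N ^ 2 + n : ℕ) : ℤ), k) = ν' k := fun k => by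
    rw [M.pot_of_ge (by rw [hm]; nlinarith), hm, hν']
  rw [hf, hl] at key
  refine ⟨?_, ?_, ?_, ?_⟩ <;> rintro ⟨rfl, rfl⟩ <;> simpa only [hpot₀, hpotₘ] using key

/-- Encoding of extremal normalized paths of `G_R^{2N²+n}`
by the formula `ψ(n) = ∃y,z. R^{N²}(x,y) ∧ φ(n,y,z) ∧ R^{N²}(z,x')`. -/
theorem statement18 (N : ℕ) (hN : 1 ≤ N) (R : DBC N) (hbal : R.Balanced)
    (n : ℕ) (hn : 1 ≤ n) (ρ : UPath N) (i j : Fin N) (p q : ℤ)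
    (hp : p = 0 ∨ p = ((2 * N ^ 2 + n : ℕ) : ℤ))
    (hq : q = 0 ∨ q = ((2 * N ^ 2 + n : ℕ) : ℤ))
    (hf : ρ.first = (p, i)) (hl : ρ.last = (q, j))
    (hρ : ρ.InUnfN R (2 * N ^ 2 + n))
    (hnorm : ρ.IsNormalized (2 * N ^ 2 + n)) :
    ∀ ν ν' : Val N,
      (∃ μ κ : Val N, relPow R.rel (N ^ 2) ν μ ∧ relPow (Rfw R) n μ κ ∧
        relPow (Rbw R) n μ κ ∧ Sfw R μ ∧ Sbw R κ ∧ relPow R.rel (N ^ 2) κ ν') →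
      (p = 0 ∧ q = ((2 * N ^ 2 + n : ℕ) : ℤ) → ν i - ν' j ≤ ρ.weight) ∧
      (p = ((2 * N ^ 2 + n : ℕ) : ℤ) ∧ q = 0 → ν' i - ν j ≤ ρ.weight) ∧
      (p = 0 ∧ q = 0 → ν i - ν j ≤ ρ.weight) ∧
      (p = ((2 * N ^ 2 + n : ℕ) : ℤ) ∧ q = ((2 * N ^ 2 + n : ℕ) : ℤ) →
        ν' i - ν' j ≤ ρ.weight) :=
  statement18_general N R hbal n ρ i j p q hp hq hf hl hρ hnorm
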